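/- arXiv:1307.7360 — 3 statements merged into one kernel-verified Lean document; each statement's English description precedes it below -/
import Mathlib

section
/- Let H be a complex Hilbert space, V ⊆ H a linear subspace, and D_1, …, D_k : V → V linear maps, each admitting a formal adjoint D_i† : V → V. Let φ : V → ℂ be a linear functional such that |φ(v)| ≤ Σ_{i=1}^k ‖D_i v‖ for all v ∈ V. Then there exists u ∈ H with ‖u‖ ≤ 1 such that φ(v) = ⟪√k · (v + Σ_{i=1}^k D_i†(D_i v)), u⟫ for all v ∈ V. -/
/-!
Put `T = 1 + Σᵢ Dᵢ†Dᵢ` on `V`. Since `Re ⟪v, Σᵢ Dᵢ†Dᵢ v⟫ = Σᵢ ‖Dᵢ v‖²`, expanding `‖T v‖²` gives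
`Σᵢ ‖Dᵢ v‖² ≤ ‖T v‖²`, and Cauchy–Schwarz turns the hypothesis into `|φ v| ≤ ‖√k · T v‖`.
So `φ` factors through the range of `√k · T` as a functional of norm at most `1`; extending it
to `H` by Hahn–Banach and representing it by Riesz yields `u`.
-/

open scoped InnerProductSpace
open Finset RCLike

section FormalAdjoint

variable {𝕜 E ι : Type*} [RCLike 𝕜] [NormedAddCommGroup E] [InnerProductSpace 𝕜 E]
  {s : Finset ι} {D Dadj : ι → E →ₗ[𝕜] E}

theorem re_inner_sum_adjoint_comp_self (hadj : ∀ i v w, ⟪D i v, w⟫_𝕜 = ⟪v, Dadj i w⟫_𝕜)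
    (v : E) : re ⟪v, ∑ i ∈ s, Dadj i (D i v)⟫_𝕜 = ∑ i ∈ s, ‖D i v‖ ^ 2 := by
  simp only [inner_sum, ← hadj, map_sum, inner_self_eq_norm_sq]

theorem sum_norm_sq_le_norm_add_sum_adjoint_comp_self_sq
    (hadj : ∀ i v w, ⟪D i v, w⟫_𝕜 = ⟪v, Dadj i w⟫_𝕜) (v : E) :
    ∑ i ∈ s, ‖D i v‖ ^ 2 ≤ ‖v + ∑ i ∈ s, Dadj i (D i v)‖ ^ 2 := by
  have hsum : 0 ≤ ∑ i ∈ s, ‖D i v‖ ^ 2 := sum_nonneg fun _ _ ↦ sq_nonneg _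
  rw [@norm_add_sq 𝕜, re_inner_sum_adjoint_comp_self hadj]
  linarith [sq_nonneg ‖v‖, sq_nonneg ‖∑ i ∈ s, Dadj i (D i v)‖]

theorem sum_norm_le_sqrt_card_mul_norm_add_sum_adjoint_comp_self
    (hadj : ∀ i v w, ⟪D i v, w⟫_𝕜 = ⟪v, Dadj i w⟫_𝕜) (v : E) :
    ∑ i ∈ s, ‖D i v‖ ≤ √(#s : ℝ) * ‖v + ∑ i ∈ s, Dadj i (D i v)‖ := by
  rw [← Real.sqrt_sq (norm_nonneg (v + _)), ← Real.sqrt_mul (Nat.cast_nonneg _)]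
  refine Real.le_sqrt_of_sq_le (sq_sum_le_card_mul_sum_sq.trans ?_)
  gcongr
  exact sum_norm_sq_le_norm_add_sum_adjoint_comp_self_sq hadj v

end FormalAdjoint

theorem LinearMap.exists_comp_rangeRestrict_eq {R M M₂ M₃ : Type*} [Ring R]
    [AddCommGroup M] [Module R M] [AddCommGroup M₂] [Module R M₂] [AddCommGroup M₃] [Module R M₃]
    (f : M →ₗ[R] M₂) (g : M →ₗ[R] M₃) (h : ker f ≤ ker g) :
    ∃ ψ : range f →ₗ[R] M₃, ψ ∘ₗ f.rangeRestrict = g := by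
  refine ⟨(ker f).liftQ g h ∘ₗ f.quotKerEquivRange.symm.toLinearMap, ?_⟩
  ext v
  have : f.quotKerEquivRange.symm (f.rangeRestrict v) = (ker f).mkQ v :=
    f.quotKerEquivRange.symm_apply_eq.2 rfl
  simp [this]

theorem exists_norm_le_inner_eq_of_norm_le_mul_norm {𝕜 E H : Type*} [RCLike 𝕜]
    [AddCommGroup E] [Module 𝕜 E] [NormedAddCommGroup H] [InnerProductSpace 𝕜 H] [CompleteSpace H]
    (S : E →ₗ[𝕜] H) (φ : E →ₗ[𝕜] 𝕜) {C : ℝ} (hC : 0 ≤ C) (h : ∀ v, ‖φ v‖ ≤ C * ‖S v‖) :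
    ∃ u : H, ‖u‖ ≤ C ∧ ∀ v, φ v = ⟪u, S v⟫_𝕜 := by
  have hker : LinearMap.ker S ≤ LinearMap.ker φ := fun v hv ↦ by
    simpa [LinearMap.mem_ker.1 hv] using h v
  obtain ⟨ψ, hψ⟩ := S.exists_comp_rangeRestrict_eq φ hker
  have hψ_apply (v : E) : ψ (S.rangeRestrict v) = φ v := LinearMap.congr_fun hψ v
  have hψ_bound (w : LinearMap.range S) : ‖ψ w‖ ≤ C * ‖w‖ := by
    obtain ⟨v, rfl⟩ := S.surjective_rangeRestrict w
    simpa [hψ_apply] using h v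
  obtain ⟨g, hg, hg_norm⟩ := exists_extension_norm_eq _ (ψ.mkContinuous C hψ_bound)
  refine ⟨(InnerProductSpace.toDual 𝕜 H).symm g, ?_, fun v ↦ ?_⟩
  · rw [LinearIsometryEquiv.norm_map, hg_norm]
    exact LinearMap.mkContinuous_norm_le _ hC _
  · rw [InnerProductSpace.toDual_symm_apply, ← hψ_apply]
    exact (hg _).symm

/-- Let `H` be a complex Hilbert space, `V ⊆ H` a linear subspace, and
`D₁, …, D_k : V → V` linear maps, each admitting a formal adjoint `Dᵢ† : V → V`
(i.e. `⟪Dᵢ v, w⟫ = ⟪v, Dᵢ† w⟫` for all `v, w ∈ V`).  If `φ : V → ℂ` is linear with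
`|φ(v)| ≤ Σᵢ ‖Dᵢ v‖`, then there exists `u ∈ H` with `‖u‖ ≤ 1` such that
`φ(v) = ⟪√k · (v + Σᵢ Dᵢ†(Dᵢ v)), u⟫` for all `v ∈ V`.
(The inner product is linear in the displayed first slot; in Mathlib's convention,
conjugate-linear in the first argument, this is `inner u (√k • (v + Σᵢ Dᵢ†(Dᵢ v)))`.) -/
theorem stmt_0 {H : Type*} [NormedAddCommGroup H] [InnerProductSpace ℂ H]
    [CompleteSpace H] (V : Submodule ℂ H) (k : ℕ)
    (D Dadj : Fin k → (V →ₗ[ℂ] V))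
    (hadj : ∀ (i : Fin k) (v w : V),
      (inner ℂ (((D i) v : H)) ((w : H)) : ℂ) = inner ℂ ((v : H)) (((Dadj i) w : H)))
    (φ : V →ₗ[ℂ] ℂ)
    (hφ : ∀ v : V, ‖φ v‖ ≤ ∑ i : Fin k, ‖((D i) v : H)‖) :
    ∃ u : H, ‖u‖ ≤ 1 ∧ ∀ v : V,
      φ v = inner ℂ u
        ((Real.sqrt k : ℂ) • ((v : H) + ∑ i : Fin k, ((Dadj i) ((D i) v) : H))) := by
  let S : V →ₗ[ℂ] H :=
    (Real.sqrt k : ℂ) • (V.subtype ∘ₗ (LinearMap.id + ∑ i, Dadj i ∘ₗ D i))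
  have hS (v : V) :
      S v = (Real.sqrt k : ℂ) • ((v : H) + ∑ i : Fin k, ((Dadj i) ((D i) v) : H)) := by
    simp [S, LinearMap.sum_apply]
  have hφS (v : V) : ‖φ v‖ ≤ 1 * ‖S v‖ := by
    have hcs := sum_norm_le_sqrt_card_mul_norm_add_sum_adjoint_comp_self (s := univ) hadj v
    rw [one_mul, hS, norm_smul, Complex.norm_real, Real.norm_of_nonneg (Real.sqrt_nonneg _)]
    simpa using (hφ v).trans hcs
  obtain ⟨u, hu, hφu⟩ := exists_norm_le_inner_eq_of_norm_le_mul_norm S φ zero_le_one hφS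
  exact ⟨u, hu, fun v ↦ hS v ▸ hφu v⟩
end

section
/- A sequence a : ℤ → ℂ has polynomial growth if and only if there exist a sequence b ∈ ℓ²(ℤ, ℂ) and a polynomial p with complex coefficients such that a(n) = p(n) · b(n) for all n ∈ ℤ. -/
/-- a sequence `a : ℤ → ℂ` has polynomial growth (there are `C > 0`
and `k ∈ ℕ` with `‖a n‖ ≤ C (1+|n|)^k` for all `n`) if and only if there exist
`b ∈ ℓ²(ℤ, ℂ)` and a polynomial `p` with complex coefficients such that
`a(n) = p(n) · b(n)` for all `n ∈ ℤ`. -/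
theorem stmt_11 (a : ℤ → ℂ) :
    (∃ (C : ℝ) (k : ℕ), 0 < C ∧ ∀ n : ℤ, ‖a n‖ ≤ C * (1 + |(n : ℝ)|) ^ k) ↔
    (∃ (b : lp (fun _ : ℤ => ℂ) 2) (p : Polynomial ℂ),
      ∀ n : ℤ, a n = p.eval (n : ℂ) * (b : ∀ _ : ℤ, ℂ) n) := by
  constructor
  · rintro ⟨C, k, hC, h⟩
    set f : ℤ → ℂ := fun n => a n / ((1 + (n : ℂ) ^ 2) ^ (k + 1)) with hf
    have hne : ∀ n : ℤ, ((1 : ℂ) + (n : ℂ) ^ 2) ^ (k + 1) ≠ 0 := by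
      intro n
      apply pow_ne_zero
      intro hcon
      have : ((1 + (n : ℝ) ^ 2 : ℝ) : ℂ) = 0 := by push_cast; linear_combination hcon
      have h2 : (1 + (n : ℝ) ^ 2 : ℝ) = 0 := by exact_mod_cast this
      nlinarith [sq_nonneg ((n : ℝ))]
    have hnorm : ∀ n : ℤ, ‖((1 : ℂ) + (n : ℂ) ^ 2) ^ (k + 1)‖ = (1 + (n : ℝ) ^ 2) ^ (k + 1) := by
      intro n
      have h0 : ((1 : ℂ) + (n : ℂ) ^ 2) = ((1 + (n : ℝ) ^ 2 : ℝ) : ℂ) := by push_cast; ring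
      rw [h0, norm_pow]
      congr 1
      rw [show ‖((1 + (n : ℝ) ^ 2 : ℝ) : ℂ)‖ = |1 + (n : ℝ) ^ 2| from Complex.norm_real _]
      exact abs_of_nonneg (by positivity)
    set D : ℝ := C * 2 ^ (k + 1) with hD
    have hbb : ∀ n : ℤ, ‖f n‖ ≤ D / (1 + |(n : ℝ)|) ^ 2 := by
      intro n
      rw [hf]
      simp only [norm_div, hnorm]
      rw [div_le_div_iff₀ (by positivity) (by positivity)]
      have h1 : (1 + |(n : ℝ)|) ^ (2 * (k + 1)) ≤ 2 ^ (k + 1) * (1 + (n : ℝ) ^ 2) ^ (k + 1) := by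
        rw [pow_mul, ← mul_pow]
        apply pow_le_pow_left₀ (by positivity)
        nlinarith [sq_nonneg (1 - |(n:ℝ)|), sq_abs (n:ℝ)]
      calc ‖a n‖ * (1 + |(n : ℝ)|) ^ 2
          ≤ (C * (1 + |(n : ℝ)|) ^ k) * (1 + |(n : ℝ)|) ^ 2 := by
            apply mul_le_mul_of_nonneg_right (h n) (by positivity)
        _ = C * (1 + |(n : ℝ)|) ^ (k + 2) := by ring
        _ ≤ C * (1 + |(n : ℝ)|) ^ (2 * (k + 1)) := by
            apply mul_le_mul_of_nonneg_left _ hC.le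
            apply pow_le_pow_right₀ (le_add_of_nonneg_right (abs_nonneg _)) (by omega)
        _ ≤ C * (2 ^ (k + 1) * (1 + (n : ℝ) ^ 2) ^ (k + 1)) :=
            mul_le_mul_of_nonneg_left h1 hC.le
        _ = D * (1 + (n : ℝ) ^ 2) ^ (k + 1) := by rw [hD]; ring
    have hmem : Memℓp f 2 := by
      apply memℓp_gen
      have ht : (2 : ENNReal).toReal = (2 : ℕ) := by simp
      have hsum : Summable (fun n : ℤ => (D / (1 + |(n : ℝ)|) ^ 2) ^ 2) := by
        have hnat : Summable (fun n : ℕ => (D / (1 + (n : ℝ)) ^ 2) ^ 2) := by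
          have h4 : Summable (fun n : ℕ => 1 / ((n : ℝ) + 1) ^ 4) := by
            have := (summable_nat_add_iff (f := fun n : ℕ => 1 / (n : ℝ) ^ 4) 1).2
              (Real.summable_one_div_nat_pow.2 (by norm_num))
            simpa using this
          have := h4.mul_left (D ^ 2)
          apply this.congr
          intro n
          field_simp
          ring
        apply Summable.of_nat_of_neg
        · apply hnat.congr; intro n; norm_num
        · apply hnat.congr; intro n; simp
      apply hsum.of_nonneg_of_le (fun n => by positivity)
      intro n
      rw [ht, Real.rpow_natCast]
      apply pow_le_pow_left₀ (norm_nonneg _) (hbb n)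
    refine ⟨⟨f, hmem⟩, ((1 : Polynomial ℂ) + Polynomial.X ^ 2) ^ (k + 1), fun n => ?_⟩
    simp only [Polynomial.eval_pow, Polynomial.eval_add, Polynomial.eval_one,
      Polynomial.eval_X]
    show a n = _ * f n
    rw [hf]
    rw [← mul_div_assoc, mul_comm, mul_div_assoc, div_self (hne n), mul_one]
  · rintro ⟨b, p, hab⟩
    set S : ℝ := ∑ i ∈ Finset.range (p.natDegree + 1), ‖p.coeff i‖ with hS
    have hS0 : 0 ≤ S := Finset.sum_nonneg fun i _ => norm_nonneg _
    refine ⟨S * ‖b‖ + 1, p.natDegree, by positivity, fun n => ?_⟩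
    have hbase : (1 : ℝ) ≤ 1 + |(n : ℝ)| := by simp [abs_nonneg]
    have hev : ‖p.eval (n : ℂ)‖ ≤ S * (1 + |(n : ℝ)|) ^ p.natDegree := by
      rw [Polynomial.eval_eq_sum_range]
      calc ‖∑ i ∈ Finset.range (p.natDegree + 1), p.coeff i * (n : ℂ) ^ i‖
          ≤ ∑ i ∈ Finset.range (p.natDegree + 1), ‖p.coeff i * (n : ℂ) ^ i‖ :=
            norm_sum_le _ _
        _ ≤ ∑ i ∈ Finset.range (p.natDegree + 1), ‖p.coeff i‖ * (1 + |(n : ℝ)|) ^ p.natDegree := by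
            apply Finset.sum_le_sum
            intro i hi
            rw [norm_mul, norm_pow]
            apply mul_le_mul_of_nonneg_left _ (norm_nonneg _)
            have h1 : ‖((n : ℤ) : ℂ)‖ = |(n : ℝ)| := by
              rw [Complex.norm_intCast]
            calc ‖((n : ℤ) : ℂ)‖ ^ i ≤ (1 + |(n : ℝ)|) ^ i := by
                  apply pow_le_pow_left₀ (norm_nonneg _)
                  rw [h1]; linarith [abs_nonneg (n:ℝ)]
              _ ≤ (1 + |(n : ℝ)|) ^ p.natDegree := by
                  apply pow_le_pow_right₀ hbase
                  exact Nat.lt_succ_iff.1 (Finset.mem_range.1 hi)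
        _ = S * (1 + |(n : ℝ)|) ^ p.natDegree := by rw [hS, Finset.sum_mul]
    calc ‖a n‖ = ‖p.eval (n : ℂ)‖ * ‖(b : ∀ _ : ℤ, ℂ) n‖ := by rw [hab n, norm_mul]
      _ ≤ (S * (1 + |(n : ℝ)|) ^ p.natDegree) * ‖b‖ := by
          apply mul_le_mul hev (lp.norm_apply_le_norm (by norm_num) b n) (norm_nonneg _)
          positivity
      _ ≤ (S * ‖b‖ + 1) * (1 + |(n : ℝ)|) ^ p.natDegree := by
          have : (1:ℝ) ≤ (1 + |(n : ℝ)|) ^ p.natDegree := one_le_pow₀ hbase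
          nlinarith [norm_nonneg b, pow_nonneg (by positivity : (0:ℝ) ≤ 1 + |(n:ℝ)|) p.natDegree]
end

section
/- Let G be a Lie group (a group which is a finite-dimensional real smooth manifold with smooth multiplication and inversion) with a left Haar measure μ, and let π be a strongly continuous unitary representation of G on a complex Hilbert space H. Then the Gårding subspace — the linear span of the vectors ∫_G f(g) π(g)v dμ(g), where f ranges over smooth compactly supported functions on G and v over H — is dense in H. -/
/-
Strong continuity makes `g ↦ π g v` close to `v` on a neighbourhood `U` of `1`. Averaging
`π g v` against a smooth nonnegative bump function of total mass one supported in `U` yields a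
vector of the Gårding subspace as close to `v` as `π` is on `U`.
-/

open MeasureTheory Function Set Topology
open scoped Manifold ContDiff

theorem norm_integral_smul_sub_le {X : Type*} [MeasurableSpace X] {μ : Measure X}
    {F : Type*} [NormedAddCommGroup F] [NormedSpace ℝ F] [CompleteSpace F]
    {h : X → ℝ} {φ : X → F} {v : F} {δ : ℝ}
    (h_nonneg : ∀ x, 0 ≤ h x) (h_int : Integrable h μ) (h_one : ∫ x, h x ∂μ = 1)
    (hφ : Integrable (fun x => h x • φ x) μ) (hclose : ∀ x ∈ support h, ‖φ x - v‖ ≤ δ) :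
    ‖∫ x, h x • φ x ∂μ - v‖ ≤ δ := by
  have hv : ∫ x, h x • v ∂μ = v := by rw [integral_smul_const, h_one, one_smul]
  have hpointwise : ∀ x, ‖h x • (φ x - v)‖ ≤ h x * δ := by
    intro x
    rw [norm_smul, Real.norm_of_nonneg (h_nonneg x)]
    by_cases hx : h x = 0
    · simp [hx]
    · exact mul_le_mul_of_nonneg_left (hclose x hx) (h_nonneg x)
  calc ‖∫ x, h x • φ x ∂μ - v‖ = ‖∫ x, h x • (φ x - v) ∂μ‖ := by
        simp_rw [smul_sub]
        rw [integral_sub hφ (h_int.smul_const v), hv]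
    _ ≤ ∫ x, h x * δ ∂μ :=
        norm_integral_le_of_norm_le (h_int.mul_const δ) (ae_of_all _ hpointwise)
    _ = δ := by rw [integral_mul_const, h_one, one_mul]

theorem exists_contMDiff_nonneg_tsupport_subset_integral_eq_one
    {E : Type*} [NormedAddCommGroup E] [NormedSpace ℝ E] [FiniteDimensional ℝ E]
    {H : Type*} [TopologicalSpace H] {I : ModelWithCorners ℝ E H}
    {M : Type*} [TopologicalSpace M] [ChartedSpace H M] [IsManifold I ∞ M] [T2Space M]
    [MeasurableSpace M] [OpensMeasurableSpace M]
    (μ : Measure M) [μ.IsOpenPosMeasure] [IsFiniteMeasureOnCompacts μ]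
    {c : M} {U : Set M} (hU : U ∈ 𝓝 c) :
    ∃ h : M → ℝ, ContMDiff I 𝓘(ℝ) ∞ h ∧ HasCompactSupport h ∧ tsupport h ⊆ U ∧
      (∀ x, 0 ≤ h x) ∧ ∫ x, h x ∂μ = 1 := by
  obtain ⟨f, -, hfU⟩ := (SmoothBumpFunction.nhds_basis_tsupport (I := I) c).mem_iff.mp hU
  have hf_int : Integrable f μ := f.continuous.integrable_of_hasCompactSupport f.hasCompactSupport
  have hf_pos : 0 < ∫ x, f x ∂μ := by
    rw [integral_pos_iff_support_of_nonneg (fun _ => f.nonneg) hf_int]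
    exact f.isOpen_support.measure_pos μ f.nonempty_support
  refine ⟨fun x => (∫ y, f y ∂μ)⁻¹ * f x, contMDiff_const.mul f.contMDiff,
    f.hasCompactSupport.mul_left, (tsupport_mul_subset_right).trans hfU,
    fun x => mul_nonneg (inv_nonneg.2 hf_pos.le) f.nonneg, ?_⟩
  rw [integral_const_mul, inv_mul_cancel₀ hf_pos.ne']

theorem stmt_18_general {E : Type*} [NormedAddCommGroup E] [NormedSpace ℝ E]
    [FiniteDimensional ℝ E]
    {G : Type*} [TopologicalSpace G] [ChartedSpace E G] [Group G]
    [LieGroup (modelWithCornersSelf ℝ E) (⊤ : ℕ∞) G]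
    [MeasurableSpace G] [BorelSpace G]
    (μ : Measure G) [μ.IsHaarMeasure]
    {H : Type*} [NormedAddCommGroup H] [InnerProductSpace ℂ H] [CompleteSpace H]
    (π : G →* (H →L[ℂ] H))
    (hπ_cont : ∀ v : H, Continuous fun g : G => π g v) :
    Dense (↑(Submodule.span ℂ
      {w : H | ∃ f : G → ℂ,
        ContMDiff (modelWithCornersSelf ℝ E) (modelWithCornersSelf ℝ ℂ) (⊤ : ℕ∞) f ∧
        HasCompactSupport f ∧
        ∃ v : H, w = ∫ g, f g • π g v ∂μ}) : Set H) := by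
  -- a T₁ topological group is Hausdorff, as smooth bump functions require
  have : IsTopologicalGroup G := topologicalGroup_of_lieGroup 𝓘(ℝ, E) (⊤ : ℕ∞)
  have : T1Space G := ChartedSpace.t1Space E G
  refine Metric.dense_iff.2 fun v ε hε => ?_
  have hU : {g : G | ‖π g v - v‖ < ε / 2} ∈ 𝓝 1 :=
    (isOpen_lt ((hπ_cont v).sub continuous_const).norm continuous_const).mem_nhds
      (by simpa using half_pos hε)
  obtain ⟨h, h_smooth, h_cs, h_sub, h_nonneg, h_one⟩ :=
    exists_contMDiff_nonneg_tsupport_subset_integral_eq_one (I := 𝓘(ℝ, E)) μ hU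
  have h_cont := h_smooth.continuous
  refine ⟨∫ g, h g • π g v ∂μ, Metric.mem_ball.2 ?_,
    Submodule.subset_span ⟨fun g => (h g : ℂ), Complex.ofRealCLM.contMDiff.comp h_smooth,
      h_cs.comp_left Complex.ofReal_zero, v, by simp_rw [Complex.coe_smul]⟩⟩
  rw [dist_eq_norm]
  refine (norm_integral_smul_sub_le h_nonneg (h_cont.integrable_of_hasCompactSupport h_cs) h_one
    ((h_cont.smul (hπ_cont v)).integrable_of_hasCompactSupport h_cs.smul_right)
    fun g hg => (h_sub (subset_tsupport h hg)).le).trans_lt (half_lt_self hε)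

/-- let `G` be a Lie group (modelled on a finite-dimensional real normed
space `E`) with a left Haar measure `μ`, and `π` a strongly continuous unitary
representation of `G` on a complex Hilbert space `H`.  Then the Gårding subspace —
the span of the vectors `∫ f(g) π(g)v dμ(g)` with `f` smooth and compactly supported
and `v ∈ H` — is dense in `H`. -/
theorem stmt_18 {E : Type*} [NormedAddCommGroup E] [NormedSpace ℝ E]
    [FiniteDimensional ℝ E]
    {G : Type*} [TopologicalSpace G] [ChartedSpace E G] [Group G]
    [LieGroup (modelWithCornersSelf ℝ E) (⊤ : ℕ∞) G]
    [LocallyCompactSpace G] [MeasurableSpace G] [BorelSpace G]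
    (μ : Measure G) [μ.IsHaarMeasure]
    {H : Type*} [NormedAddCommGroup H] [InnerProductSpace ℂ H] [CompleteSpace H]
    (π : G →* (H →L[ℂ] H))
    (hπ_iso : ∀ (g : G) (v : H), ‖π g v‖ = ‖v‖)
    (hπ_cont : ∀ v : H, Continuous fun g : G => π g v) :
    Dense (↑(Submodule.span ℂ
      {w : H | ∃ f : G → ℂ,
        ContMDiff (modelWithCornersSelf ℝ E) (modelWithCornersSelf ℝ ℂ) (⊤ : ℕ∞) f ∧
        HasCompactSupport f ∧
        ∃ v : H, w = ∫ g, f g • π g v ∂μ}) : Set H) :=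
  stmt_18_general μ π hπ_cont
end
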